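/- Let F, P, H be real n×n matrices with H positive semidefinite, and suppose ‖F^t‖ ≤ C ρ^t for all t ≥ 0 with C > 0, 0 < ρ < 1. Let (w_t) and (ŵ_t) be vector sequences with ‖w_t‖ ≤ w̄ and ‖ŵ_t‖ ≤ ŵ for all t. Define η(w;s,t) = Σ_{τ=s}^{t} (Fᵀ)^{τ-s} P w_τ and V(t) = Σ_{s=0}^{t} η(w;s,t)ᵀ H η(ŵ;s,t). Then for every 1 ≤ t ≤ T, V(t)/t ≤ 2‖H‖ (C‖P‖/(1-ρ)^{3/2})² w̄ ŵ. -/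

import Mathlib

/-!
Since `‖(Fᵀ)^k‖ = ‖F^k‖ ≤ C ρ^k`, every vector `η(w; s, t)` is bounded by the geometric series
`C ‖P‖ w̄ / (1 - ρ)`, so each of the `t + 1 ≤ 2t` terms of `V(t)` is at most
`‖H‖ (C ‖P‖ / (1 - ρ))² w̄ ŵ`; finally `(1 - ρ)^{3/2} ≤ 1 - ρ`.
-/

open Finset ContinuousLinearMap

/-- The paper's `η(v; s, t) = ∑_{τ = s}^{t} A^{τ - s} P v_τ`, where `A = Fᵀ` in the theorem. -/
noncomputable def discountedSum {E : Type*} [NormedAddCommGroup E] [NormedSpace ℝ E]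
    (A P : E →L[ℝ] E) (v : ℕ → E) (s t : ℕ) : E :=
  ∑ τ ∈ Icc s t, (A ^ (τ - s)) (P (v τ))

theorem norm_adjoint_pow {E : Type*} [NormedAddCommGroup E] [InnerProductSpace ℝ E]
    [CompleteSpace E] (F : E →L[ℝ] E) (k : ℕ) : ‖adjoint F ^ k‖ = ‖F ^ k‖ := by
  rw [← star_eq_adjoint, ← star_pow, star_eq_adjoint, LinearIsometryEquiv.norm_map]

theorem sum_Icc_pow_sub_le {ρ : ℝ} (hρ0 : 0 ≤ ρ) (hρ1 : ρ < 1) (s t : ℕ) :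
    ∑ τ ∈ Icc s t, ρ ^ (τ - s) ≤ 1 / (1 - ρ) := by
  rw [← Ico_add_one_right_eq_Icc, sum_Ico_eq_sum_range]
  simp only [Nat.add_sub_cancel_left]
  simpa using geom_sum_Ico_le_of_lt_one (m := 0) (n := t + 1 - s) hρ0 hρ1

theorem norm_discountedSum_le {E : Type*} [NormedAddCommGroup E] [NormedSpace ℝ E]
    {A P : E →L[ℝ] E} {C ρ : ℝ} (hC : 0 ≤ C) (hρ0 : 0 ≤ ρ) (hρ1 : ρ < 1)
    (hA : ∀ k : ℕ, ‖A ^ k‖ ≤ C * ρ ^ k) {v : ℕ → E} {vbar : ℝ} (hv : ∀ t, ‖v t‖ ≤ vbar)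
    (s t : ℕ) : ‖discountedSum A P v s t‖ ≤ C * ‖P‖ / (1 - ρ) * vbar := by
  have hvbar : 0 ≤ vbar := (norm_nonneg _).trans (hv 0)
  have hterm : ∀ τ, ‖(A ^ (τ - s)) (P (v τ))‖ ≤ C * ‖P‖ * vbar * ρ ^ (τ - s) := fun τ =>
    calc ‖(A ^ (τ - s)) (P (v τ))‖ ≤ ‖A ^ (τ - s)‖ * (‖P‖ * ‖v τ‖) :=
          (le_opNorm _ _).trans (by gcongr; exact le_opNorm _ _)
      _ ≤ C * ρ ^ (τ - s) * (‖P‖ * vbar) := by gcongr; exacts [hA _, hv τ]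
      _ = C * ‖P‖ * vbar * ρ ^ (τ - s) := by ring
  calc ‖discountedSum A P v s t‖ ≤ ∑ τ ∈ Icc s t, C * ‖P‖ * vbar * ρ ^ (τ - s) :=
        (norm_sum_le _ _).trans (sum_le_sum fun τ _ => hterm τ)
    _ = C * ‖P‖ * vbar * ∑ τ ∈ Icc s t, ρ ^ (τ - s) := (mul_sum _ _ _).symm
    _ ≤ C * ‖P‖ * vbar * (1 / (1 - ρ)) := by gcongr; exact sum_Icc_pow_sub_le hρ0 hρ1 s t
    _ = C * ‖P‖ / (1 - ρ) * vbar := by ring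

theorem real_inner_apply_le_opNorm_mul {E : Type*} [NormedAddCommGroup E]
    [InnerProductSpace ℝ E] (H : E →L[ℝ] E) (x y : E) :
    inner ℝ x (H y) ≤ ‖H‖ * (‖x‖ * ‖y‖) :=
  calc inner ℝ x (H y) ≤ ‖x‖ * ‖H y‖ := real_inner_le_norm _ _
    _ ≤ ‖x‖ * (‖H‖ * ‖y‖) := by gcongr; exact le_opNorm _ _
    _ = ‖H‖ * (‖x‖ * ‖y‖) := by ring

theorem div_le_div_rpow_three_halves {c a : ℝ} (hc : 0 ≤ c) (ha0 : 0 < a) (ha1 : a ≤ 1) :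
    c / a ≤ c / a ^ ((3 : ℝ) / 2) := by
  have : a ^ ((3 : ℝ) / 2) ≤ a ^ (1 : ℝ) :=
    Real.rpow_le_rpow_of_exponent_ge ha0 ha1 (by norm_num)
  rw [Real.rpow_one] at this
  gcongr

theorem stmt6_general (n T : ℕ)
    (F P H : EuclideanSpace ℝ (Fin n) →L[ℝ] EuclideanSpace ℝ (Fin n))
    (C ρ : ℝ) (hC : 0 < C) (hρ0 : 0 < ρ) (hρ1 : ρ < 1)
    (hF : ∀ t : ℕ, ‖F ^ t‖ ≤ C * ρ ^ t)
    (w what : ℕ → EuclideanSpace ℝ (Fin n)) (wbar whatbar : ℝ)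
    (hw : ∀ t, ‖w t‖ ≤ wbar) (hwhat : ∀ t, ‖what t‖ ≤ whatbar) :
    ∀ t, 1 ≤ t → t ≤ T →
      (∑ s ∈ Finset.range (t + 1),
          (inner ℝ
            (∑ τ ∈ Finset.Icc s t,
              ((ContinuousLinearMap.adjoint F) ^ (τ - s)) (P (w τ)))
            (H (∑ τ ∈ Finset.Icc s t,
              ((ContinuousLinearMap.adjoint F) ^ (τ - s)) (P (what τ)))) : ℝ)) /
          (t : ℝ) ≤
        2 * ‖H‖ * (C * ‖P‖ / (1 - ρ) ^ ((3 : ℝ) / 2)) ^ 2 * wbar * whatbar := by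
  intro t ht _
  change (∑ s ∈ range (t + 1), inner ℝ (discountedSum (adjoint F) P w s t)
    (H (discountedSum (adjoint F) P what s t))) / t ≤ _
  set K := C * ‖P‖ / (1 - ρ)
  have hA : ∀ k : ℕ, ‖adjoint F ^ k‖ ≤ C * ρ ^ k := fun k => (norm_adjoint_pow F k).trans_le (hF k)
  have hwbar : 0 ≤ wbar := (norm_nonneg _).trans (hw 0)
  have hwhatbar : 0 ≤ whatbar := (norm_nonneg _).trans (hwhat 0)
  have hterm : ∀ s, inner ℝ (discountedSum (adjoint F) P w s t)
      (H (discountedSum (adjoint F) P what s t)) ≤ ‖H‖ * K ^ 2 * wbar * whatbar := fun s =>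
    calc _ ≤ ‖H‖ * (‖discountedSum (adjoint F) P w s t‖ * ‖discountedSum (adjoint F) P what s t‖) :=
          real_inner_apply_le_opNorm_mul H _ _
      _ ≤ ‖H‖ * (K * wbar * (K * whatbar)) := by
          gcongr
          exacts [norm_discountedSum_le hC.le hρ0.le hρ1 hA hw s t,
            norm_discountedSum_le hC.le hρ0.le hρ1 hA hwhat s t]
      _ = ‖H‖ * K ^ 2 * wbar * whatbar := by ring
  have hK : K ≤ C * ‖P‖ / (1 - ρ) ^ ((3 : ℝ) / 2) :=
    div_le_div_rpow_three_halves (by positivity) (by linarith) (by linarith)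
  have ht' : (1 : ℝ) ≤ t := by exact_mod_cast ht
  rw [div_le_iff₀ (by positivity)]
  calc _ ≤ ∑ _s ∈ range (t + 1), ‖H‖ * K ^ 2 * wbar * whatbar := sum_le_sum fun s _ => hterm s
    _ = (t + 1) * (‖H‖ * K ^ 2 * wbar * whatbar) := by
        rw [sum_const, card_range, nsmul_eq_mul]; push_cast; ring
    _ ≤ 2 * t * (‖H‖ * K ^ 2 * wbar * whatbar) := by gcongr; linarith
    _ = 2 * ‖H‖ * K ^ 2 * wbar * whatbar * t := by ring
    _ ≤ _ := by gcongr

theorem stmt6 (n T : ℕ)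
    (F P H : EuclideanSpace ℝ (Fin n) →L[ℝ] EuclideanSpace ℝ (Fin n))
    (hsym : ∀ x y, (inner ℝ (H x) y : ℝ) = inner ℝ x (H y))
    (hpsd : ∀ x, 0 ≤ (inner ℝ x (H x) : ℝ))
    (C ρ : ℝ) (hC : 0 < C) (hρ0 : 0 < ρ) (hρ1 : ρ < 1)
    (hF : ∀ t : ℕ, ‖F ^ t‖ ≤ C * ρ ^ t)
    (w what : ℕ → EuclideanSpace ℝ (Fin n)) (wbar whatbar : ℝ)
    (hw : ∀ t, ‖w t‖ ≤ wbar) (hwhat : ∀ t, ‖what t‖ ≤ whatbar) :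
    ∀ t, 1 ≤ t → t ≤ T →
      (∑ s ∈ Finset.range (t + 1),
          (inner ℝ
            (∑ τ ∈ Finset.Icc s t,
              ((ContinuousLinearMap.adjoint F) ^ (τ - s)) (P (w τ)))
            (H (∑ τ ∈ Finset.Icc s t,
              ((ContinuousLinearMap.adjoint F) ^ (τ - s)) (P (what τ)))) : ℝ)) /
          (t : ℝ) ≤
        2 * ‖H‖ * (C * ‖P‖ / (1 - ρ) ^ ((3 : ℝ) / 2)) ^ 2 * wbar * whatbar :=
  stmt6_general n T F P H C ρ hC hρ0 hρ1 hF w what wbar whatbar hw hwhat
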